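/- Consider the discrete-time quantum walk search on the n-dimensional hypercube (N = 2ⁿ vertices, n ≥ 2) with marked set M = {i, j}, where i and j differ in exactly one bit. Let ψ(0) be the uniform initial state with all nN amplitudes equal to 1/√(nN), and ψ(t) = (U′)^t ψ(0). Then for every t ≥ 0, the probability of finding a marked vertex p_M(t) = Σ_{v∈M} Σ_c |ψ(t)(v,c)|² satisfies p_M(t) ≤ (2/(n·2ⁿ))·(2√((n−1)n³) + n(2n−1)); in particular p_M(t) = O(n²/N). -/

import Mathlib

/-- Discrete-time quantum walk on the `n`-dimensional hypercube.
Vertices are binary strings `v : Fin n → Bool`; basis states are `(v, c)` with coin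
direction `c : Fin n`. `flipBit v c` flips bit `c` of `v` (i.e. `v ⊕ e_c`). -/
def HypercubeWalk.flipBit (n : ℕ) (v : Fin n → Bool) (c : Fin n) : Fin n → Bool :=
  Function.update v c (!(v c))

/-- The shift operator `S`, with `S|v, c⟩ = |v ⊕ e_c, c⟩`. -/
noncomputable def HypercubeWalk.shift (n : ℕ) (ψ : (Fin n → Bool) × Fin n → ℂ) :
    (Fin n → Bool) × Fin n → ℂ :=
  fun e => ψ (HypercubeWalk.flipBit n e.1 e.2, e.2)

/-- The Grover coin `I ⊗ C`, `(Cψ)(v, c) = (2/n) Σ_{c'} ψ(v, c') − ψ(v, c)`. -/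
noncomputable def HypercubeWalk.coin (n : ℕ) (ψ : (Fin n → Bool) × Fin n → ℂ) :
    (Fin n → Bool) × Fin n → ℂ :=
  fun e => (2 / (n : ℂ)) * (∑ c' : Fin n, ψ (e.1, c')) - ψ e

/-- The query `Q ⊗ I`, flipping the sign at marked vertices. -/
noncomputable def HypercubeWalk.query (n : ℕ) (M : Finset (Fin n → Bool))
    (ψ : (Fin n → Bool) × Fin n → ℂ) : (Fin n → Bool) × Fin n → ℂ :=
  fun e => if e.1 ∈ M then -ψ e else ψ e

/-- One step of the search algorithm, `U' = S · (I ⊗ C) · (Q ⊗ I)`. -/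
noncomputable def HypercubeWalk.step (n : ℕ) (M : Finset (Fin n → Bool))
    (ψ : (Fin n → Bool) × Fin n → ℂ) : (Fin n → Bool) × Fin n → ℂ :=
  HypercubeWalk.shift n (HypercubeWalk.coin n (HypercubeWalk.query n M ψ))

/-!
Let `φ` have amplitude `a` everywhere except `-(n - 1) a` on the two coin states along the marked
edge. Its coin rows sum to zero at the marked vertices and are constant elsewhere, so the query
followed by the coin fixes `φ`, and the marked edge is invariant under the shift: `φ` is a
stationary state of the walk. The uniform state is `φ + r` with `r = n a` on the marked edge, and
the walk is linear and unitary, so by Minkowski `√p_M(t) ≤ √p_M(φ) + ‖r‖ = √(2(n - 1)n) a + √2 n a`.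
-/

namespace HypercubeWalk

variable {n : ℕ}

abbrev State (n : ℕ) : Type := (Fin n → Bool) × Fin n → ℂ

lemma flipBit_flipBit (v : Fin n → Bool) (c : Fin n) :
    flipBit n (flipBit n v c) c = v := by
  simp [flipBit]

lemma flipBit_eq_iff {v w : Fin n → Bool} {c : Fin n} :
    flipBit n v c = w ↔ v = flipBit n w c :=
  ⟨fun h => h ▸ (flipBit_flipBit v c).symm, fun h => h ▸ flipBit_flipBit w c⟩

lemma flipBit_ne (v : Fin n → Bool) (c : Fin n) : flipBit n v c ≠ v := fun h => by
  simpa [flipBit] using congrFun h c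

lemma sum_ite_eq_add_mul {ι R : Type*} [Fintype ι] [DecidableEq ι] [CommRing R] (c₀ : ι)
    (x y : R) : ∑ c, (if c = c₀ then x else y) = x + (Fintype.card ι - 1) * y := by
  rw [← Finset.add_sum_erase _ _ (Finset.mem_univ c₀), if_pos rfl,
    Finset.sum_congr rfl fun c hc => if_neg (Finset.ne_of_mem_erase hc), Finset.sum_const,
    Finset.card_erase_of_mem (Finset.mem_univ c₀), Finset.card_univ, nsmul_eq_mul,
    Nat.cast_pred (Fintype.card_pos_iff.2 ⟨c₀⟩)]

lemma sqrt_sum_norm_add_sq_le {ι E : Type*} [SeminormedAddCommGroup E] (s : Finset ι)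
    (f g : ι → E) :
    √(∑ e ∈ s, ‖f e + g e‖ ^ 2) ≤ √(∑ e ∈ s, ‖f e‖ ^ 2) + √(∑ e ∈ s, ‖g e‖ ^ 2) := by
  have h := norm_add_le (WithLp.toLp 2 fun e : s => f e) (WithLp.toLp 2 fun e : s => g e)
  simpa only [← WithLp.toLp_add, PiLp.norm_eq_of_L2, PiLp.toLp_apply, Pi.add_apply,
    Finset.sum_coe_sort s (fun e => ‖f e + g e‖ ^ 2), Finset.sum_coe_sort s (fun e => ‖f e‖ ^ 2),
    Finset.sum_coe_sort s (fun e => ‖g e‖ ^ 2)] using h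

lemma sum_norm_sq_grover {ι : Type*} [Fintype ι] (x : ι → ℂ) :
    ∑ c, ‖2 / (Fintype.card ι : ℂ) * (∑ c', x c') - x c‖ ^ 2 = ∑ c, ‖x c‖ ^ 2 := by
  rcases isEmpty_or_nonempty ι with _ | _
  · simp
  have hd : (Fintype.card ι : ℝ) ≠ 0 := Nat.cast_ne_zero.2 Fintype.card_ne_zero
  set T := ∑ c', x c'
  set α : ℝ := 2 / Fintype.card ι with hα
  have expand (c : ι) : ‖(α : ℂ) * T - x c‖ ^ 2
      = α ^ 2 * ‖T‖ ^ 2 + ‖x c‖ ^ 2 - 2 * α * (T * starRingEnd ℂ (x c)).re := by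
    rw [Complex.sq_norm, Complex.sq_norm, Complex.sq_norm, Complex.normSq_sub,
      Complex.normSq_mul, Complex.normSq_ofReal, mul_assoc (α : ℂ), Complex.re_ofReal_mul]
    ring
  have cross : ∑ c, (T * starRingEnd ℂ (x c)).re = ‖T‖ ^ 2 := by
    rw [← Complex.re_sum, ← Finset.mul_sum, ← map_sum, Complex.mul_conj, Complex.normSq_eq_norm_sq]
    norm_cast
  have hαC : 2 / (Fintype.card ι : ℂ) = α := by push_cast [hα]; rfl
  simp only [hαC, expand, Finset.sum_sub_distrib, Finset.sum_add_distrib, ← Finset.mul_sum, cross,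
    Finset.sum_const, Finset.card_univ, nsmul_eq_mul]
  rw [hα]
  field_simp
  ring

noncomputable def normSq (ψ : State n) : ℝ := ∑ e, ‖ψ e‖ ^ 2

lemma normSq_shift (ψ : State n) : normSq (shift n ψ) = normSq ψ :=
  Equiv.sum_comp (Function.Involutive.toPerm (fun e : (Fin n → Bool) × Fin n =>
    (flipBit n e.1 e.2, e.2)) fun e => by simp [flipBit_flipBit]) fun e => ‖ψ e‖ ^ 2

lemma normSq_coin (ψ : State n) : normSq (coin n ψ) = normSq ψ := by
  simp only [normSq, coin, Fintype.sum_prod_type]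
  refine Finset.sum_congr rfl fun v _ => ?_
  simpa using sum_norm_sq_grover fun c => ψ (v, c)

lemma normSq_query (M : Finset (Fin n → Bool)) (ψ : State n) :
    normSq (query n M ψ) = normSq ψ := by
  simp only [normSq, query]
  congr 1 with e
  split_ifs <;> simp

lemma normSq_step (M : Finset (Fin n → Bool)) (ψ : State n) :
    normSq (step n M ψ) = normSq ψ := by
  rw [step, normSq_shift, normSq_coin, normSq_query]

lemma normSq_iterate_step (M : Finset (Fin n → Bool)) (t : ℕ) (ψ : State n) :
    normSq ((step n M)^[t] ψ) = normSq ψ := by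
  induction t generalizing ψ with
  | zero => rfl
  | succ t ih => rw [Function.iterate_succ_apply, ih, normSq_step]

lemma step_add (M : Finset (Fin n → Bool)) (ψ χ : State n) :
    step n M (ψ + χ) = step n M ψ + step n M χ := by
  funext e
  simp only [step, shift, coin, query, Pi.add_apply]
  split_ifs <;> simp only [neg_add, Finset.sum_add_distrib] <;> ring

lemma iterate_step_add_of_fixed {M : Finset (Fin n → Bool)} {φ : State n}
    (hφ : step n M φ = φ) (χ : State n) (t : ℕ) :
    (step n M)^[t] (φ + χ) = φ + (step n M)^[t] χ := by
  induction t with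
  | zero => rfl
  | succ t ih => rw [Function.iterate_succ_apply', ih, step_add, hφ, Function.iterate_succ_apply']

section Stationary

variable (i : Fin n → Bool) (c₀ : Fin n) (a : ℂ)

def markedEdge : Finset ((Fin n → Bool) × Fin n) := {(i, c₀), (flipBit n i c₀, c₀)}

noncomputable def stationaryState : State n :=
  fun e => if e ∈ markedEdge i c₀ then -((n - 1) * a) else a

lemma shift_stationaryState : shift n (stationaryState i c₀ a) = stationaryState i c₀ a := by
  funext ⟨v, c⟩
  by_cases hc : c = c₀
  · subst hc
    simp [shift, stationaryState, markedEdge, flipBit_eq_iff, flipBit_flipBit, or_comm]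
  · simp [shift, stationaryState, markedEdge, hc]

variable {i c₀} {v : Fin n → Bool}

lemma stationaryState_of_mem (hv : v ∈ ({i, flipBit n i c₀} : Finset _)) (c : Fin n) :
    stationaryState i c₀ a (v, c) = if c = c₀ then -((n - 1) * a) else a := by
  by_cases hc : c = c₀ <;> simp_all [stationaryState, markedEdge]

lemma stationaryState_of_not_mem (hv : v ∉ ({i, flipBit n i c₀} : Finset _)) (c : Fin n) :
    stationaryState i c₀ a (v, c) = a := by
  simp_all [stationaryState, markedEdge]

end Stationary

lemma coin_query_eq_self (hn : n ≠ 0) {M : Finset (Fin n → Bool)} {ψ : State n}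
    (hM : ∀ v ∈ M, ∑ c, ψ (v, c) = 0) (hU : ∀ v ∉ M, ∀ c c', ψ (v, c') = ψ (v, c)) :
    coin n (query n M ψ) = ψ := by
  funext ⟨v, c⟩
  by_cases hv : v ∈ M
  · simp [coin, query, hv, hM v hv]
  · simp only [coin, query, hv, if_false, Finset.sum_congr rfl fun c' _ => hU v hv c c',
      Finset.sum_const, Finset.card_univ, Fintype.card_fin, nsmul_eq_mul]
    field_simp
    ring

lemma step_stationaryState (i : Fin n → Bool) (c₀ : Fin n) (a : ℂ) :
    step n {i, flipBit n i c₀} (stationaryState i c₀ a) = stationaryState i c₀ a := by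
  have row_sum (v) (hv : v ∈ ({i, flipBit n i c₀} : Finset _)) :
      ∑ c, stationaryState i c₀ a (v, c) = 0 := by
    simp only [stationaryState_of_mem a hv, sum_ite_eq_add_mul, Fintype.card_fin]
    ring
  rw [step, coin_query_eq_self c₀.pos.ne' row_sum fun v hv c c' => by
    rw [stationaryState_of_not_mem a hv, stationaryState_of_not_mem a hv],
    shift_stationaryState]

noncomputable def markedProb (M : Finset (Fin n → Bool)) (ψ : State n) : ℝ :=
  ∑ v ∈ M, ∑ c, ‖ψ (v, c)‖ ^ 2

lemma markedProb_add_le (M : Finset (Fin n → Bool)) (ψ χ : State n) :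
    markedProb M (ψ + χ) ≤ (√(markedProb M ψ) + √(normSq χ)) ^ 2 := by
  have sum_product (φ : State n) : markedProb M φ = ∑ e ∈ M ×ˢ Finset.univ, ‖φ e‖ ^ 2 := by
    rw [markedProb, Finset.sum_product]
  have marked_le_normSq : ∑ e ∈ M ×ˢ Finset.univ, ‖χ e‖ ^ 2 ≤ normSq χ :=
    Finset.sum_le_univ_sum_of_nonneg fun _ => by positivity
  calc markedProb M (ψ + χ) = √(markedProb M (ψ + χ)) ^ 2 :=
        (Real.sq_sqrt (Finset.sum_nonneg fun _ _ => by positivity)).symm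
    _ ≤ _ := by
      gcongr
      rw [sum_product, sum_product]
      exact (sqrt_sum_norm_add_sq_le _ ψ χ).trans (by gcongr)

lemma norm_sq_natCast_sub_one_mul (hn : n ≠ 0) (a : ℂ) :
    ‖((n : ℂ) - 1) * a‖ ^ 2 = ((n : ℝ) - 1) ^ 2 * ‖a‖ ^ 2 := by
  have : (n : ℂ) - 1 = ((n - 1 : ℕ) : ℂ) := by push_cast [Nat.one_le_iff_ne_zero.2 hn]; ring
  rw [norm_mul, mul_pow, this, Complex.norm_natCast, Nat.cast_pred (Nat.pos_of_ne_zero hn)]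

lemma markedProb_stationaryState (i : Fin n → Bool) (c₀ : Fin n) (a : ℂ) :
    markedProb {i, flipBit n i c₀} (stationaryState i c₀ a) = 2 * ((n - 1) * n) * ‖a‖ ^ 2 := by
  have row (v) (hv : v ∈ ({i, flipBit n i c₀} : Finset _)) :
      ∑ c, ‖stationaryState i c₀ a (v, c)‖ ^ 2 = (n - 1) * n * ‖a‖ ^ 2 := by
    simp only [stationaryState_of_mem a hv, apply_ite (‖·‖ ^ 2), sum_ite_eq_add_mul,
      Fintype.card_fin, norm_neg, norm_sq_natCast_sub_one_mul c₀.pos.ne']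
    ring
  rw [markedProb, Finset.sum_pair (flipBit_ne i c₀).symm, row i (by simp), row _ (by simp)]
  ring

lemma normSq_sub_stationaryState (i : Fin n → Bool) (c₀ : Fin n) (a : ℂ) :
    normSq ((fun _ => a) - stationaryState i c₀ a) = 2 * n ^ 2 * ‖a‖ ^ 2 := by
  have hdiff (e) : ‖((fun _ => a) - stationaryState i c₀ a : State n) e‖ ^ 2
      = if e ∈ markedEdge i c₀ then n ^ 2 * ‖a‖ ^ 2 else 0 := by
    by_cases he : e ∈ markedEdge i c₀
    · rw [Pi.sub_apply, stationaryState, if_pos he, if_pos he, sub_neg_eq_add,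
        show a + (n - 1) * a = n * a by ring, norm_mul, mul_pow, Complex.norm_natCast]
    · simp [stationaryState, he]
  have hcard : (markedEdge i c₀).card = 2 :=
    Finset.card_pair fun h => flipBit_ne i c₀ (congrArg Prod.fst h).symm
  rw [normSq, Finset.sum_congr rfl fun e _ => hdiff e, Fintype.sum_ite_mem, Finset.sum_const,
    hcard, nsmul_eq_mul]
  ring

lemma sqrt_add_sqrt_sq_eq {x q : ℝ} (hx : 1 ≤ x) (hq : 0 ≤ q) :
    (√(2 * ((x - 1) * x) * q) + √(2 * x ^ 2 * q)) ^ 2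
      = 2 * q * (2 * √((x - 1) * x ^ 3) + x * (2 * x - 1)) := by
  have cross : √(2 * ((x - 1) * x) * q) * √(2 * x ^ 2 * q) = 2 * q * √((x - 1) * x ^ 3) := by
    rw [← Real.sqrt_mul (by positivity), show 2 * ((x - 1) * x) * q * (2 * x ^ 2 * q)
      = (2 * q) ^ 2 * ((x - 1) * x ^ 3) by ring, Real.sqrt_mul (by positivity),
      Real.sqrt_sq (by positivity)]
  rw [add_sq, Real.sq_sqrt (by positivity), Real.sq_sqrt (by positivity)]
  linear_combination 2 * cross

end HypercubeWalk

open HypercubeWalk in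
theorem hypercube_two_adjacent_marked_prob_bound_general (n : ℕ)
    (i j : Fin n → Bool) (hij : ∃ c : Fin n, j = HypercubeWalk.flipBit n i c) :
    ∀ t : ℕ,
      ∑ v ∈ ({i, j} : Finset (Fin n → Bool)), ∑ c : Fin n,
        ‖
          ((HypercubeWalk.step n {i, j})^[t]
            (fun _ => ((1 / Real.sqrt (n * 2 ^ n) : ℝ) : ℂ)) (v, c))‖ ^ 2
      ≤ (2 / (n * 2 ^ n : ℝ)) *
          (2 * Real.sqrt (((n : ℝ) - 1) * n ^ 3) + n * (2 * n - 1)) := by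
  obtain ⟨c₀, rfl⟩ := hij
  intro t
  set a : ℂ := ((1 / √(n * 2 ^ n) : ℝ) : ℂ)
  have norm_a : ‖a‖ ^ 2 = 1 / (n * 2 ^ n) := by
    rw [Complex.norm_real, Real.norm_eq_abs, sq_abs, div_pow, one_pow, Real.sq_sqrt (by positivity)]
  set φ := stationaryState i c₀ a
  rw [show (fun _ => a) = φ + ((fun _ => a) - φ) from (add_sub_cancel φ _).symm,
    iterate_step_add_of_fixed (step_stationaryState i c₀ a)]
  calc markedProb {i, flipBit n i c₀} (φ + (step n _)^[t] ((fun _ => a) - φ))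
      ≤ (√(2 * ((n - 1) * n) * (1 / (n * 2 ^ n))) + √(2 * n ^ 2 * (1 / (n * 2 ^ n)))) ^ 2 := by
        grw [markedProb_add_le, normSq_iterate_step, markedProb_stationaryState,
          normSq_sub_stationaryState, norm_a]
    _ = 2 / (n * 2 ^ n : ℝ) * (2 * √((n - 1) * n ^ 3) + n * (2 * n - 1)) := by
        rw [sqrt_add_sqrt_sq_eq (by exact_mod_cast c₀.pos) (by positivity), mul_one_div]

/-- For two adjacent marked vertices `i` and `j` of the `n`-dimensional hypercube
(`N = 2ⁿ` vertices), the probability of finding a marked vertex after any number of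
steps of the search algorithm, starting from the uniform state, is at most
`(2/(n·2ⁿ))·(2√((n−1)n³) + n(2n−1))`; in particular it is `O(n²/N)`. -/
theorem hypercube_two_adjacent_marked_prob_bound (n : ℕ) (hn : 2 ≤ n)
    (i j : Fin n → Bool) (hij : ∃ c : Fin n, j = HypercubeWalk.flipBit n i c) :
    ∀ t : ℕ,
      ∑ v ∈ ({i, j} : Finset (Fin n → Bool)), ∑ c : Fin n,
        ‖
          ((HypercubeWalk.step n {i, j})^[t]
            (fun _ => ((1 / Real.sqrt (n * 2 ^ n) : ℝ) : ℂ)) (v, c))‖ ^ 2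
      ≤ (2 / (n * 2 ^ n : ℝ)) *
          (2 * Real.sqrt (((n : ℝ) - 1) * n ^ 3) + n * (2 * n - 1)) :=
  hypercube_two_adjacent_marked_prob_bound_general n i j hij
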